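/- A closed subset K of the harmonic little α-Bloch space HB₀(α) is compact if and only if K is bounded in norm and lim_{|z|→1} sup_{f∈K} (1-|z|²)^α(|f_z(z)| + |f_{z̄}(z)|) = 0. -/

import Mathlib

open Complex Metric Set Filter Topology

noncomputable section

/-- The open unit disk in ℂ. -/
def unitDisk : Set ℂ := Metric.ball 0 1

/-- Wirtinger derivative f_z = (1/2)(f_x - i f_y). -/
def wZ (f : ℂ → ℂ) (z : ℂ) : ℂ :=
  (1/2) * (fderiv ℝ f z 1 - Complex.I * fderiv ℝ f z Complex.I)

/-- Wirtinger derivative f_z̄ = (1/2)(f_x + i f_y). -/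
def wZbar (f : ℂ → ℂ) (z : ℂ) : ℂ :=
  (1/2) * (fderiv ℝ f z 1 + Complex.I * fderiv ℝ f z Complex.I)

/-- f is harmonic on the disk: canonical decomposition f = h + conj g with h, g holomorphic. -/
def HarmonicDisk (f : ℂ → ℂ) : Prop :=
  ∃ h g : ℂ → ℂ, DifferentiableOn ℂ h unitDisk ∧ DifferentiableOn ℂ g unitDisk ∧
    ∀ z ∈ unitDisk, f z = h z + (starRingEnd ℂ) (g z)

/-- The weight (1-|z|²)^α (|f_z(z)| + |f_z̄(z)|). -/
def weight (α : ℝ) (f : ℂ → ℂ) (z : ℂ) : ℝ :=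
  (1 - ‖z‖ ^ 2) ^ α * (‖wZ f z‖ + ‖wZbar f z‖)

/-- The Bloch seminorm sup_{z ∈ D} weight α f z. -/
def semiNorm (α : ℝ) (f : ℂ → ℂ) : ℝ := sSup (weight α f '' unitDisk)

/-- The HB(α) norm. -/
def HBnorm (α : ℝ) (f : ℂ → ℂ) : ℝ := ‖f 0‖ + semiNorm α f

/-- Membership in the harmonic α-Bloch space HB(α). -/
def memHB (α : ℝ) (f : ℂ → ℂ) : Prop :=
  HarmonicDisk f ∧ BddAbove (weight α f '' unitDisk)

/-- The little-oh condition: weight α f z → 0 as |z| → 1. -/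
def littleOh (α : ℝ) (f : ℂ → ℂ) : Prop :=
  ∀ ε > 0, ∃ r < (1:ℝ), ∀ z ∈ unitDisk, r < ‖z‖ → weight α f z < ε

/-- Membership in the harmonic little α-Bloch space HB₀(α). -/
def memHB0 (α : ℝ) (f : ℂ → ℂ) : Prop := memHB α f ∧ littleOh α f

/-- τ_{φ,α}(z) = (1-|z|²)^α |φ'(z)| / (1-|φ(z)|²)^α. -/
def tau (α : ℝ) (φ : ℂ → ℂ) (z : ℂ) : ℝ :=
  (1 - ‖z‖ ^ 2) ^ α * ‖deriv φ z‖ / (1 - ‖φ z‖ ^ 2) ^ α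

/-!
Necessity: a sequentially compact `K` is bounded, and if the weights did not vanish uniformly
near the circle we could pick `f_n ∈ K` and `|z_n| → 1` with weight `≥ ε`; a subsequence
`f_{n_k} → g` contradicts `g ∈ HB₀(α)`, because the weight of `f` at `z` is at most the weight
of `g` at `z` plus `‖f - g‖`.

Sufficiency: write `f_n = h_n + conj g_n` with `g_n(0) = 0`. The norm bound gives
`|h_n'| + |g_n'| ≤ M (1 - r²)^(-α)` on `|z| ≤ r`, so the `h_n` and `g_n` are uniformly Lipschitz on
every compact subdisk and bounded at `0`. By Arzelà–Ascoli a subsequence converges locally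
uniformly, hence so do its derivatives (Weierstrass). The limit `f = H + conj G` lies in `HB₀(α)`,
and `‖f_{n_k} - f‖ → 0`: on `|z| ≤ r` the weight of the difference is small by uniform
convergence of the derivatives, on `|z| > r` by the uniform little-oh condition.
-/

open scoped ComplexConjugate NNReal

lemma mem_unitDisk {z : ℂ} : z ∈ unitDisk ↔ ‖z‖ < 1 := mem_ball_zero_iff

lemma isOpen_unitDisk : IsOpen unitDisk := isOpen_ball

lemma zero_mem_unitDisk : (0 : ℂ) ∈ unitDisk := mem_ball_self one_pos

lemma closedBall_subset_unitDisk {r : ℝ} (hr : r < 1) : closedBall (0 : ℂ) r ⊆ unitDisk :=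
  closedBall_subset_ball hr

lemma IsCompact.exists_subset_closedBall_of_subset_unitDisk {K : Set ℂ} (hK : IsCompact K)
    (hKD : K ⊆ unitDisk) : ∃ n : ℕ, K ⊆ closedBall 0 (1 - 1 / (n + 1)) := by
  obtain ⟨r, hr, hKr⟩ := exists_lt_subset_ball hK.isClosed hKD
  obtain ⟨n, hn⟩ := exists_nat_one_div_lt (sub_pos.mpr hr)
  exact ⟨n, hKr.trans <| ball_subset_closedBall.trans <|
    closedBall_subset_closedBall (by linarith)⟩

lemma tendstoLocallyUniformlyOn_unitDisk {E : Type*} [NormedAddCommGroup E] {F : ℕ → ℂ → E}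
    {G : ℂ → E}
    (h : ∀ n : ℕ, TendstoUniformlyOn F G atTop (closedBall 0 (1 - 1 / (n + 1)))) :
    TendstoLocallyUniformlyOn F G atTop unitDisk := by
  refine (tendstoLocallyUniformlyOn_iff_forall_isCompact isOpen_unitDisk).mpr fun K hKD hK => ?_
  obtain ⟨n, hKn⟩ := hK.exists_subset_closedBall_of_subset_unitDisk hKD
  exact (h n).mono hKn

lemma TendstoLocallyUniformlyOn.comp_tendsto {ι κ X E : Type*} [TopologicalSpace X]
    [UniformSpace E] {F : ι → X → E} {G : X → E} {p : Filter ι} {s : Set X}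
    (h : TendstoLocallyUniformlyOn F G p s) {φ : κ → ι} {q : Filter κ}
    (hφ : Tendsto φ q p) :
    TendstoLocallyUniformlyOn (fun i => F (φ i)) G q s :=
  fun u hu x hx => (h u hu x hx).imp fun _ ht => ⟨ht.1, hφ.eventually ht.2⟩

lemma one_sub_norm_sq_pos {z : ℂ} (hz : z ∈ unitDisk) : 0 < 1 - ‖z‖ ^ 2 := by
  have := mem_unitDisk.mp hz
  nlinarith [norm_nonneg z]

lemma rpow_one_sub_norm_sq_le_one {α : ℝ} (hα : 0 ≤ α) {z : ℂ} (hz : z ∈ unitDisk) :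
    (1 - ‖z‖ ^ 2) ^ α ≤ 1 :=
  Real.rpow_le_one (one_sub_norm_sq_pos hz).le (by nlinarith [norm_nonneg z]) hα

lemma rpow_one_sub_sq_le {α r : ℝ} (hα : 0 ≤ α) (hr : r < 1) {z : ℂ} (hz : ‖z‖ ≤ r) :
    (1 - r ^ 2) ^ α ≤ (1 - ‖z‖ ^ 2) ^ α := by
  have h0 : 0 ≤ ‖z‖ := norm_nonneg z
  exact Real.rpow_le_rpow (by nlinarith) (by nlinarith) hα

section ArzelaAscoli

theorem exists_subseq_tendstoUniformlyOn_of_equicontinuousOn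
    {X Y : Type*} [TopologicalSpace X] [MetricSpace Y] {t : ℕ → Set X}
    (ht : ∀ n, IsCompact (t n)) (hmono : Monotone t) {F : ℕ → X → Y}
    (hF : ∀ n, EquicontinuousOn F (t n))
    (hbdd : ∀ n, ∀ x ∈ t n, ∃ Q, IsCompact Q ∧ ∀ i, F i x ∈ Q) :
    ∃ σ : ℕ → ℕ, StrictMono σ ∧ ∃ G : X → Y,
      ∀ n, TendstoUniformlyOn (fun i => F (σ i)) G atTop (t n) := by
  -- Uniform convergence on the countably many `t n` is metrizable, so the compact closure
  -- provided by Arzelà–Ascoli is sequentially compact.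
  let F' : ℕ → UniformOnFun X Y (range t) := fun i => UniformOnFun.ofFun (range t) (F i)
  have := UniformOnFun.isCountablyGenerated_uniformity (β := Y) (range t) (t := t)
    (fun n => mem_range_self n) hmono (by rintro _ ⟨n, rfl⟩; exact ⟨n, subset_rfl⟩)
  have := UniformSpace.firstCountableTopology (UniformOnFun X Y (range t))
  have hcpt : IsCompact (closure (range F')) :=
    ArzelaAscoli.isCompact_closure_of_isClosedEmbedding (F := UniformOnFun.toFun (range t))
      (by rintro _ ⟨n, rfl⟩; exact ht n) .id
      (by rintro _ ⟨n, rfl⟩; exact equicontinuousOn_iff_range.mp (hF n))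
      (by
        rintro _ ⟨n, rfl⟩ x hx
        obtain ⟨Q, hQ, hFQ⟩ := hbdd n x hx
        exact ⟨Q, hQ, by rintro _ ⟨i, rfl⟩; exact hFQ i⟩)
  obtain ⟨G, -, σ, hσ, hlim⟩ := hcpt.tendsto_subseq fun i => subset_closure (mem_range_self i)
  exact ⟨σ, hσ, G, fun n =>
    UniformOnFun.tendsto_iff_tendstoUniformlyOn.mp hlim _ ⟨n, rfl⟩⟩

lemma LipschitzOnWith.norm_le_add_mul {E F : Type*} [SeminormedAddCommGroup E]
    [SeminormedAddCommGroup F] {f : E → F} {L : ℝ≥0} {r : ℝ}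
    (hf : LipschitzOnWith L f (closedBall 0 r)) {x : E} (hx : x ∈ closedBall 0 r) :
    ‖f x‖ ≤ ‖f 0‖ + L * r := by
  have h0 : (0 : E) ∈ closedBall 0 r := mem_closedBall_self (nonempty_closedBall.mp ⟨x, hx⟩)
  have hdist := hf.dist_le_mul x hx 0 h0
  rw [dist_eq_norm, dist_zero_right] at hdist
  calc ‖f x‖ ≤ ‖f 0‖ + ‖f x - f 0‖ := norm_le_norm_add_norm_sub' _ _
    _ ≤ ‖f 0‖ + L * r := by
      gcongr
      exact hdist.trans (by gcongr; exact mem_closedBall_zero_iff.mp hx)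

theorem exists_subseq_tendstoLocallyUniformlyOn_unitDisk {F : ℕ → ℂ → ℂ}
    (hLip : ∀ r < 1, ∃ L : ℝ≥0, ∀ n, LipschitzOnWith L (F n) (closedBall 0 r))
    (hB : ∃ B, ∀ n, ‖F n 0‖ ≤ B) :
    ∃ σ : ℕ → ℕ, StrictMono σ ∧
      ∃ G, TendstoLocallyUniformlyOn (fun i => F (σ i)) G atTop unitDisk := by
  obtain ⟨B, hB⟩ := hB
  choose L hL using fun n : ℕ => hLip (1 - 1 / (n + 1)) (sub_lt_self 1 (by positivity))
  obtain ⟨σ, hσ, G, hG⟩ := exists_subseq_tendstoUniformlyOn_of_equicontinuousOn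
    (t := fun n : ℕ => closedBall (0 : ℂ) (1 - 1 / (n + 1))) (fun n => isCompact_closedBall _ _)
    (fun m n hmn => closedBall_subset_closedBall (by gcongr))
    (fun n => (LipschitzOnWith.uniformEquicontinuousOn _ _ (hL n)).equicontinuousOn)
    (fun n z hz => ⟨closedBall 0 (B + L n * (1 - 1 / (n + 1))), isCompact_closedBall _ _,
      fun i => mem_closedBall_zero_iff.mpr (((hL n i).norm_le_add_mul hz).trans
        (by gcongr; exact hB i))⟩)
  exact ⟨σ, hσ, G, tendstoLocallyUniformlyOn_unitDisk hG⟩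

end ArzelaAscoli

lemma wZ_eq_and_wZbar_eq {f : ℂ → ℂ} {z a b : ℂ}
    (hf : ∀ v, fderiv ℝ f z v = a * v + b * conj v) : wZ f z = a ∧ wZbar f z = b := by
  simp only [wZ, wZbar, hf, map_one, conj_I]
  constructor <;> ring_nf <;> rw [I_sq] <;> ring

lemma fderiv_add_conj_apply {h g : ℂ → ℂ} {z : ℂ} (hh : DifferentiableAt ℂ h z)
    (hg : DifferentiableAt ℂ g z) (v : ℂ) :
    fderiv ℝ (fun w => h w + conj (g w)) z v = deriv h z * v + conj (deriv g z) * conj v := by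
  have hderiv := (hh.hasDerivAt.hasFDerivAt.restrictScalars ℝ).fun_add
    (hg.hasDerivAt.hasFDerivAt.restrictScalars ℝ).star
  change fderiv ℝ (fun w => h w + star (g w)) z v = _
  rw [hderiv.fderiv]
  simp [mul_comm]

structure IsHarmonicDecomp (f h g : ℂ → ℂ) : Prop where
  differentiableOn_h : DifferentiableOn ℂ h unitDisk
  differentiableOn_g : DifferentiableOn ℂ g unitDisk
  eqOn : EqOn f (fun z => h z + conj (g z)) unitDisk

lemma harmonicDisk_iff {f : ℂ → ℂ} : HarmonicDisk f ↔ ∃ h g, IsHarmonicDecomp f h g :=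
  ⟨fun ⟨h, g, hh, hg, heq⟩ => ⟨h, g, hh, hg, heq⟩,
    fun ⟨h, g, hd⟩ => ⟨h, g, hd.1, hd.2, hd.3⟩⟩

lemma HarmonicDisk.exists_isHarmonicDecomp {f : ℂ → ℂ} (hf : HarmonicDisk f) :
    ∃ h g, IsHarmonicDecomp f h g ∧ h 0 = f 0 ∧ g 0 = 0 := by
  obtain ⟨h, g, hh, hg, heq⟩ := hf
  refine ⟨fun z => h z + conj (g 0), fun z => g z - g 0,
    ⟨hh.add_const _, hg.sub_const _, fun z hz => ?_⟩, ?_, sub_self _⟩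
  · simp only [heq z hz, map_sub]
    ring
  · simp [heq 0 zero_mem_unitDisk]

namespace IsHarmonicDecomp

variable {f h g f₂ h₂ g₂ : ℂ → ℂ} {z : ℂ}

lemma harmonicDisk (hd : IsHarmonicDecomp f h g) : HarmonicDisk f :=
  harmonicDisk_iff.mpr ⟨h, g, hd⟩

lemma differentiableAt_h (hd : IsHarmonicDecomp f h g) (hz : z ∈ unitDisk) :
    DifferentiableAt ℂ h z :=
  hd.differentiableOn_h.differentiableAt (isOpen_unitDisk.mem_nhds hz)

lemma differentiableAt_g (hd : IsHarmonicDecomp f h g) (hz : z ∈ unitDisk) :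
    DifferentiableAt ℂ g z :=
  hd.differentiableOn_g.differentiableAt (isOpen_unitDisk.mem_nhds hz)

lemma sub (hd : IsHarmonicDecomp f h g) (hd₂ : IsHarmonicDecomp f₂ h₂ g₂) :
    IsHarmonicDecomp (f - f₂) (h - h₂) (g - g₂) where
  differentiableOn_h := hd.differentiableOn_h.sub hd₂.differentiableOn_h
  differentiableOn_g := hd.differentiableOn_g.sub hd₂.differentiableOn_g
  eqOn z hz := by
    simp only [Pi.sub_apply, hd.eqOn hz, hd₂.eqOn hz, map_sub]
    ring

lemma weight_eq (hd : IsHarmonicDecomp f h g) (α : ℝ) (hz : z ∈ unitDisk) :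
    weight α f z = (1 - ‖z‖ ^ 2) ^ α * (‖deriv h z‖ + ‖deriv g z‖) := by
  have hfderiv : fderiv ℝ f z = fderiv ℝ (fun w => h w + conj (g w)) z :=
    (eventuallyEq_of_mem (isOpen_unitDisk.mem_nhds hz) hd.eqOn).fderiv_eq
  obtain ⟨hwZ, hwZbar⟩ := wZ_eq_and_wZbar_eq (f := f) fun v => by
    rw [hfderiv, fderiv_add_conj_apply (hd.differentiableAt_h hz) (hd.differentiableAt_g hz)]
  rw [weight, hwZ, hwZbar, norm_conj]

lemma weight_sub_eq (hd : IsHarmonicDecomp f h g) (hd₂ : IsHarmonicDecomp f₂ h₂ g₂)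
    (α : ℝ) (hz : z ∈ unitDisk) :
    weight α (f - f₂) z = (1 - ‖z‖ ^ 2) ^ α *
      (‖deriv h z - deriv h₂ z‖ + ‖deriv g z - deriv g₂ z‖) := by
  rw [(hd.sub hd₂).weight_eq α hz,
    deriv_sub (hd.differentiableAt_h hz) (hd₂.differentiableAt_h hz),
    deriv_sub (hd.differentiableAt_g hz) (hd₂.differentiableAt_g hz)]

end IsHarmonicDecomp

section Weight

variable {α : ℝ} {f f₂ : ℂ → ℂ} {z : ℂ}

lemma weight_nonneg (hz : z ∈ unitDisk) : 0 ≤ weight α f z :=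
  mul_nonneg (Real.rpow_nonneg (one_sub_norm_sq_pos hz).le α) (by positivity)

lemma weight_sub_le (hf : HarmonicDisk f) (hf₂ : HarmonicDisk f₂) (hz : z ∈ unitDisk) :
    weight α (f - f₂) z ≤ weight α f z + weight α f₂ z := by
  obtain ⟨h, g, hd⟩ := harmonicDisk_iff.mp hf
  obtain ⟨h₂, g₂, hd₂⟩ := harmonicDisk_iff.mp hf₂
  rw [hd.weight_sub_eq hd₂ α hz, hd.weight_eq α hz, hd₂.weight_eq α hz, ← mul_add]
  refine mul_le_mul_of_nonneg_left ?_ (Real.rpow_nonneg (one_sub_norm_sq_pos hz).le α)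
  linarith [norm_sub_le (deriv h z) (deriv h₂ z), norm_sub_le (deriv g z) (deriv g₂ z)]

lemma weight_le_add_weight_sub (hf : HarmonicDisk f) (hf₂ : HarmonicDisk f₂)
    (hz : z ∈ unitDisk) : weight α f z ≤ weight α f₂ z + weight α (f - f₂) z := by
  obtain ⟨h, g, hd⟩ := harmonicDisk_iff.mp hf
  obtain ⟨h₂, g₂, hd₂⟩ := harmonicDisk_iff.mp hf₂
  rw [hd.weight_sub_eq hd₂ α hz, hd.weight_eq α hz, hd₂.weight_eq α hz, ← mul_add]
  refine mul_le_mul_of_nonneg_left ?_ (Real.rpow_nonneg (one_sub_norm_sq_pos hz).le α)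
  linarith [norm_le_norm_add_norm_sub' (deriv h z) (deriv h₂ z),
    norm_le_norm_add_norm_sub' (deriv g z) (deriv g₂ z)]

lemma semiNorm_nonneg : 0 ≤ semiNorm α f :=
  Real.sSup_nonneg (by rintro _ ⟨z, hz, rfl⟩; exact weight_nonneg hz)

lemma weight_le_semiNorm (hb : BddAbove (weight α f '' unitDisk)) (hz : z ∈ unitDisk) :
    weight α f z ≤ semiNorm α f :=
  le_csSup hb (mem_image_of_mem _ hz)

lemma semiNorm_le {c : ℝ} (hc : 0 ≤ c) (h : ∀ z ∈ unitDisk, weight α f z ≤ c) :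
    semiNorm α f ≤ c :=
  Real.sSup_le (by rintro _ ⟨z, hz, rfl⟩; exact h z hz) hc

lemma semiNorm_le_HBnorm : semiNorm α f ≤ HBnorm α f :=
  le_add_of_nonneg_left (norm_nonneg _)

lemma norm_apply_zero_le_HBnorm : ‖f 0‖ ≤ HBnorm α f :=
  le_add_of_nonneg_right semiNorm_nonneg

lemma memHB.sub (hf : memHB α f) (hf₂ : memHB α f₂) : memHB α (f - f₂) := by
  refine ⟨?_, semiNorm α f + semiNorm α f₂, ?_⟩
  · obtain ⟨h, g, hd⟩ := harmonicDisk_iff.mp hf.1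
    obtain ⟨h₂, g₂, hd₂⟩ := harmonicDisk_iff.mp hf₂.1
    exact harmonicDisk_iff.mpr ⟨_, _, hd.sub hd₂⟩
  · rintro _ ⟨z, hz, rfl⟩
    exact (weight_sub_le hf.1 hf₂.1 hz).trans
      (add_le_add (weight_le_semiNorm hf.2 hz) (weight_le_semiNorm hf₂.2 hz))

lemma weight_le_add_semiNorm_sub (hf : memHB α f) (hf₂ : memHB α f₂) (hz : z ∈ unitDisk) :
    weight α f z ≤ weight α f₂ z + semiNorm α (f - f₂) :=
  (weight_le_add_weight_sub hf.1 hf₂.1 hz).trans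
    (add_le_add le_rfl (weight_le_semiNorm (hf.sub hf₂).2 hz))

lemma HBnorm_le_add_HBnorm_sub (hf : memHB α f) (hf₂ : memHB α f₂) :
    HBnorm α f ≤ HBnorm α f₂ + HBnorm α (f - f₂) := by
  have hsemi : semiNorm α f ≤ semiNorm α f₂ + semiNorm α (f - f₂) :=
    semiNorm_le (add_nonneg semiNorm_nonneg semiNorm_nonneg) fun z hz =>
      (weight_le_add_semiNorm_sub hf hf₂ hz).trans
        (add_le_add (weight_le_semiNorm hf₂.2 hz) le_rfl)
  have h0 : ‖f 0‖ ≤ ‖f₂ 0‖ + ‖(f - f₂) 0‖ := norm_le_norm_add_norm_sub' _ _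
  simp only [HBnorm] at *
  linarith

end Weight

def IsSeqCompactHB (α : ℝ) (K : Set (ℂ → ℂ)) : Prop :=
  ∀ f : ℕ → ℂ → ℂ, (∀ n, f n ∈ K) →
    ∃ σ : ℕ → ℕ, StrictMono σ ∧
      ∃ g ∈ K, Tendsto (fun k => HBnorm α (f (σ k) - g)) atTop (𝓝 0)

def UniformLittleOh (α : ℝ) (K : Set (ℂ → ℂ)) : Prop :=
  ∀ ε > 0, ∃ r < (1 : ℝ), ∀ f ∈ K, ∀ z ∈ unitDisk, r < ‖z‖ → weight α f z < ε

section SeqCompact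

variable {α : ℝ} {K : Set (ℂ → ℂ)}

lemma IsSeqCompactHB.exists_HBnorm_le (hK : ∀ f ∈ K, memHB α f) (hcpt : IsSeqCompactHB α K) :
    ∃ M, ∀ f ∈ K, HBnorm α f ≤ M := by
  by_contra! hunbdd
  choose f hfK hfM using fun n : ℕ => hunbdd n
  obtain ⟨σ, hσ, g, hgK, hlim⟩ := hcpt f hfK
  have hbdd : ∀ᶠ k in atTop, HBnorm α (f (σ k)) ≤ HBnorm α g + 1 :=
    (hlim.eventually (gt_mem_nhds one_pos)).mono fun k hk =>
      (HBnorm_le_add_HBnorm_sub (hK _ (hfK _)) (hK g hgK)).trans (by linarith)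
  have hlarge : ∀ᶠ k in atTop, HBnorm α g + 1 < σ k :=
    (tendsto_natCast_atTop_atTop.comp hσ.tendsto_atTop).eventually_gt_atTop _
  obtain ⟨k, hk, hk'⟩ := (hbdd.and hlarge).exists
  linarith [hfM (σ k)]

lemma IsSeqCompactHB.uniformLittleOh (hK : ∀ f ∈ K, memHB0 α f) (hcpt : IsSeqCompactHB α K) :
    UniformLittleOh α K := by
  intro ε hε
  by_contra! hfar
  choose f hfK z hz hzr hzε using fun n : ℕ => hfar (1 - 1 / (n + 1)) (by
    have : (0 : ℝ) < 1 / (n + 1) := by positivity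
    linarith)
  obtain ⟨σ, hσ, g, hgK, hlim⟩ := hcpt f hfK
  obtain ⟨r, hr, hgr⟩ := (hK g hgK).2 (ε / 2) (half_pos hε)
  have hclose : ∀ᶠ k in atTop, HBnorm α (f (σ k) - g) < ε / 2 :=
    hlim.eventually (gt_mem_nhds (half_pos hε))
  have hnear : ∀ᶠ k in atTop, 1 / ((σ k : ℝ) + 1) < 1 - r :=
    (tendsto_one_div_add_atTop_nhds_zero_nat.comp hσ.tendsto_atTop).eventually
      (gt_mem_nhds (sub_pos.mpr hr))
  obtain ⟨k, hk, hk'⟩ := (hclose.and hnear).exists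
  have hfz := weight_le_add_semiNorm_sub (hK _ (hfK (σ k))).1 (hK g hgK).1 (hz (σ k))
  have hgz := hgr _ (hz (σ k)) (by linarith [hzr (σ k)])
  linarith [hzε (σ k), semiNorm_le_HBnorm (α := α) (f := f (σ k) - g)]

end SeqCompact

section Compactness

variable {α M : ℝ}

lemma IsHarmonicDecomp.norm_deriv_add_le {f h g : ℂ → ℂ} (hd : IsHarmonicDecomp f h g)
    (hα : 0 ≤ α) (hw : ∀ z ∈ unitDisk, weight α f z ≤ M) {r : ℝ} (hr : r < 1) {z : ℂ}
    (hz : ‖z‖ ≤ r) : ‖deriv h z‖ + ‖deriv g z‖ ≤ M / (1 - r ^ 2) ^ α := by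
  have hzD : z ∈ unitDisk := mem_unitDisk.mpr (hz.trans_lt hr)
  have hwz := hw z hzD
  rw [hd.weight_eq α hzD] at hwz
  rw [le_div_iff₀ (Real.rpow_pos_of_pos (by nlinarith [norm_nonneg z]) α), mul_comm]
  exact (mul_le_mul_of_nonneg_right (rpow_one_sub_sq_le hα hr hz) (by positivity)).trans hwz

lemma lipschitzOnWith_of_norm_deriv_le {F : ℂ → ℂ} (hF : DifferentiableOn ℂ F unitDisk)
    {r C : ℝ} (hr : r < 1) (hC : ∀ z ∈ closedBall 0 r, ‖deriv F z‖ ≤ C) :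
    LipschitzOnWith C.toNNReal F (closedBall 0 r) :=
  (convex_closedBall 0 r).lipschitzOnWith_of_nnnorm_deriv_le
    (fun _ hz => hF.differentiableAt (isOpen_unitDisk.mem_nhds (closedBall_subset_unitDisk hr hz)))
    (fun z hz => NNReal.le_toNNReal_of_coe_le (hC z hz))

theorem exists_subseq_tendstoLocallyUniformlyOn_of_isHarmonicDecomp (hα : 0 ≤ α)
    {f h g : ℕ → ℂ → ℂ} (hd : ∀ n, IsHarmonicDecomp (f n) (h n) (g n))
    (hw : ∀ n, ∀ z ∈ unitDisk, weight α (f n) z ≤ M)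
    (hh0 : ∀ n, ‖h n 0‖ ≤ M) (hg0 : ∀ n, ‖g n 0‖ ≤ M) :
    ∃ σ : ℕ → ℕ, StrictMono σ ∧ ∃ H G : ℂ → ℂ,
      TendstoLocallyUniformlyOn (fun i => h (σ i)) H atTop unitDisk ∧
      TendstoLocallyUniformlyOn (fun i => g (σ i)) G atTop unitDisk := by
  have hLip : ∀ r < 1, ∀ n,
      LipschitzOnWith (M / (1 - r ^ 2) ^ α).toNNReal (h n) (closedBall 0 r) ∧
      LipschitzOnWith (M / (1 - r ^ 2) ^ α).toNNReal (g n) (closedBall 0 r) := fun r hr n =>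
    have hbound {z : ℂ} (hz : z ∈ closedBall 0 r) :=
      (hd n).norm_deriv_add_le hα (hw n) hr (mem_closedBall_zero_iff.mp hz)
    ⟨lipschitzOnWith_of_norm_deriv_le (hd n).differentiableOn_h hr fun z hz =>
        (le_add_of_nonneg_right (norm_nonneg _)).trans (hbound hz),
      lipschitzOnWith_of_norm_deriv_le (hd n).differentiableOn_g hr fun z hz =>
        (le_add_of_nonneg_left (norm_nonneg _)).trans (hbound hz)⟩
  obtain ⟨σ₁, hσ₁, H, hH⟩ := exists_subseq_tendstoLocallyUniformlyOn_unitDisk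
    (fun r hr => ⟨_, fun n => (hLip r hr n).1⟩) ⟨M, hh0⟩
  obtain ⟨σ₂, hσ₂, G, hG⟩ := exists_subseq_tendstoLocallyUniformlyOn_unitDisk
    (fun r hr => ⟨_, fun n => (hLip r hr (σ₁ n)).2⟩) ⟨M, fun n => hg0 (σ₁ n)⟩
  exact ⟨σ₁ ∘ σ₂, hσ₁.comp hσ₂, H, G, hH.comp_tendsto hσ₂.tendsto_atTop, hG⟩

variable {f h g : ℕ → ℂ → ℂ} {F H G : ℂ → ℂ}

lemma tendsto_weight_of_isHarmonicDecomp (hd : ∀ n, IsHarmonicDecomp (f n) (h n) (g n))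
    (hD : IsHarmonicDecomp F H G)
    (hh : TendstoLocallyUniformlyOn (fun n => deriv (h n)) (deriv H) atTop unitDisk)
    (hg : TendstoLocallyUniformlyOn (fun n => deriv (g n)) (deriv G) atTop unitDisk)
    {z : ℂ} (hz : z ∈ unitDisk) :
    Tendsto (fun n => weight α (f n) z) atTop (𝓝 (weight α F z)) := by
  simp only [(hd _).weight_eq α hz, hD.weight_eq α hz]
  exact (((hh.tendsto_at hz).norm).add (hg.tendsto_at hz).norm).const_mul _

lemma UniformLittleOh.mono {K K' : Set (ℂ → ℂ)} (hK : UniformLittleOh α K)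
    (hsub : K' ⊆ K) : UniformLittleOh α K' :=
  fun ε hε => (hK ε hε).imp fun _ ⟨hr, hKr⟩ => ⟨hr, fun f hf => hKr f (hsub hf)⟩

lemma UniformLittleOh.littleOh_of_tendsto (hvan : UniformLittleOh α (range f))
    (hlim : ∀ z ∈ unitDisk, Tendsto (fun n => weight α (f n) z) atTop (𝓝 (weight α F z))) :
    littleOh α F := by
  intro ε hε
  obtain ⟨r, hr, hvan⟩ := hvan (ε / 2) (half_pos hε)
  refine ⟨r, hr, fun z hz hrz => ?_⟩
  have : weight α F z ≤ ε / 2 :=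
    le_of_tendsto' (hlim z hz) fun n => (hvan _ (mem_range_self n) z hz hrz).le
  linarith

lemma tendsto_HBnorm_zero {u : ℕ → ℂ → ℂ} (h0 : Tendsto (fun n => u n 0) atTop (𝓝 0))
    (hw : ∀ ε > 0, ∀ᶠ n in atTop, ∀ z ∈ unitDisk, weight α (u n) z ≤ ε) :
    Tendsto (fun n => HBnorm α (u n)) atTop (𝓝 0) := by
  have hsemi : Tendsto (fun n => semiNorm α (u n)) atTop (𝓝 0) :=
    tendsto_order.2 ⟨fun a ha => Eventually.of_forall fun n => ha.trans_le semiNorm_nonneg,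
      fun a ha => (hw (a / 2) (half_pos ha)).mono fun n hn =>
        (semiNorm_le (half_pos ha).le hn).trans_lt (half_lt_self ha)⟩
  simpa [HBnorm] using h0.norm.add hsemi

theorem tendsto_HBnorm_sub_of_isHarmonicDecomp (hα : 0 ≤ α)
    (hd : ∀ n, IsHarmonicDecomp (f n) (h n) (g n)) (hD : IsHarmonicDecomp F H G)
    (hh : TendstoLocallyUniformlyOn (fun n => deriv (h n)) (deriv H) atTop unitDisk)
    (hg : TendstoLocallyUniformlyOn (fun n => deriv (g n)) (deriv G) atTop unitDisk)
    (h0 : Tendsto (fun n => f n 0) atTop (𝓝 (F 0)))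
    (hvan : UniformLittleOh α (range f)) (hF : littleOh α F) :
    Tendsto (fun n => HBnorm α (f n - F)) atTop (𝓝 0) := by
  refine tendsto_HBnorm_zero (by simpa [sub_self] using h0.sub_const (F 0)) fun ε hε => ?_
  obtain ⟨r, hr, hvan⟩ := hvan (ε / 2) (half_pos hε)
  obtain ⟨rF, hrF, hF⟩ := hF (ε / 2) (half_pos hε)
  have hunif {φ : ℕ → ℂ → ℂ} {Φ : ℂ → ℂ}
      (hφ : TendstoLocallyUniformlyOn φ Φ atTop unitDisk) :
      ∀ᶠ n in atTop, ∀ z ∈ closedBall 0 (max r rF), ‖φ n z - Φ z‖ < ε / 2 := by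
    have := (tendstoLocallyUniformlyOn_iff_forall_isCompact isOpen_unitDisk).mp hφ _
      (closedBall_subset_unitDisk (max_lt hr hrF)) (isCompact_closedBall _ _)
    simpa [dist_eq_norm, norm_sub_rev] using
      Metric.tendstoUniformlyOn_iff.mp this (ε / 2) (half_pos hε)
  filter_upwards [hunif hh, hunif hg] with n hhn hgn z hz
  rcases le_or_gt ‖z‖ (max r rF) with hzr | hzr
  · rw [(hd n).weight_sub_eq hD α hz]
    have hzB : z ∈ closedBall 0 (max r rF) := mem_closedBall_zero_iff.mpr hzr
    calc _ ≤ 1 * (‖deriv (h n) z - deriv H z‖ + ‖deriv (g n) z - deriv G z‖) :=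
          mul_le_mul_of_nonneg_right (rpow_one_sub_norm_sq_le_one hα hz) (by positivity)
      _ ≤ ε := by linarith [hhn z hzB, hgn z hzB]
  · have hfn := hvan _ (mem_range_self n) z hz ((le_max_left r rF).trans_lt hzr)
    have hFz := hF z hz ((le_max_right r rF).trans_lt hzr)
    linarith [weight_sub_le (α := α) (hd n).harmonicDisk hD.harmonicDisk hz]

end Compactness

theorem UniformLittleOh.exists_subseq_tendsto_HBnorm {α M : ℝ} (hα : 0 ≤ α)
    {f : ℕ → ℂ → ℂ} (hf : ∀ n, memHB α (f n)) (hM : ∀ n, HBnorm α (f n) ≤ M)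
    (hvan : UniformLittleOh α (range f)) :
    ∃ σ : ℕ → ℕ, StrictMono σ ∧
      ∃ F, memHB0 α F ∧ Tendsto (fun k => HBnorm α (f (σ k) - F)) atTop (𝓝 0) := by
  choose h g hd hh0 hg0 using fun n => (hf n).1.exists_isHarmonicDecomp
  have hw : ∀ n, ∀ z ∈ unitDisk, weight α (f n) z ≤ M := fun n _ hz =>
    (weight_le_semiNorm (hf n).2 hz).trans (semiNorm_le_HBnorm.trans (hM n))
  have hf0 : ∀ n, ‖f n 0‖ ≤ M := fun n => norm_apply_zero_le_HBnorm.trans (hM n)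
  obtain ⟨σ, hσ, H, G, hH, hG⟩ := exists_subseq_tendstoLocallyUniformlyOn_of_isHarmonicDecomp
    hα hd hw (fun n => hh0 n ▸ hf0 n)
    (fun n => by simpa [hg0 n] using (norm_nonneg _).trans (hf0 n))
  have hholo {φ : ℕ → ℂ → ℂ} (hφ : ∀ n, DifferentiableOn ℂ (φ n) unitDisk) :
      ∀ᶠ n in atTop, DifferentiableOn ℂ (φ (σ n)) unitDisk :=
    Eventually.of_forall fun n => hφ _
  have hD : IsHarmonicDecomp (fun z => H z + conj (G z)) H G :=
    ⟨hH.differentiableOn (hholo fun n => (hd n).differentiableOn_h) isOpen_unitDisk,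
      hG.differentiableOn (hholo fun n => (hd n).differentiableOn_g) isOpen_unitDisk,
      fun _ _ => rfl⟩
  have hH' := hH.deriv (hholo fun n => (hd n).differentiableOn_h) isOpen_unitDisk
  have hG' := hG.deriv (hholo fun n => (hd n).differentiableOn_g) isOpen_unitDisk
  have hlim z (hz : z ∈ unitDisk) :=
    tendsto_weight_of_isHarmonicDecomp (α := α) (fun n => hd (σ n)) hD hH' hG' hz
  have hvanσ : UniformLittleOh α (range fun n => f (σ n)) :=
    hvan.mono (range_comp_subset_range σ f)
  have hlittle := hvanσ.littleOh_of_tendsto hlim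
  have h0 : Tendsto (fun n => f (σ n) 0) atTop (𝓝 (H 0 + conj (G 0))) :=
    ((hH.tendsto_at zero_mem_unitDisk).add (hG.tendsto_at zero_mem_unitDisk).star).congr
      fun n => ((hd (σ n)).eqOn zero_mem_unitDisk).symm
  refine ⟨σ, hσ, _, ⟨⟨hD.harmonicDisk, M, ?_⟩, hlittle⟩,
    tendsto_HBnorm_sub_of_isHarmonicDecomp hα (fun n => hd (σ n)) hD hH' hG' h0 hvanσ hlittle⟩
  rintro _ ⟨z, hz, rfl⟩
  exact le_of_tendsto' (hlim z hz) fun n => hw _ z hz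

/-- A (sequentially) closed subset K of HB₀(α) is (sequentially) compact iff it is bounded
and satisfies lim_{|z|→1} sup_{f ∈ K} weight α f z = 0. -/
theorem compact_subset_HB0_iff (α : ℝ) (hα : 0 < α) (K : Set (ℂ → ℂ))
    (hK : ∀ f ∈ K, memHB0 α f)
    (hclosed : ∀ f : ℕ → ℂ → ℂ, (∀ n, f n ∈ K) → ∀ g, memHB0 α g →
      Tendsto (fun n => HBnorm α (f n - g)) atTop (nhds 0) → g ∈ K) :
    (∀ f : ℕ → ℂ → ℂ, (∀ n, f n ∈ K) →
        ∃ σ : ℕ → ℕ, StrictMono σ ∧ ∃ g ∈ K,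
          Tendsto (fun k => HBnorm α (f (σ k) - g)) atTop (nhds 0)) ↔
      ((∃ M : ℝ, ∀ f ∈ K, HBnorm α f ≤ M) ∧
        ∀ ε > 0, ∃ r < (1:ℝ), ∀ f ∈ K, ∀ z ∈ unitDisk, r < ‖z‖ → weight α f z < ε) := by
  refine ⟨fun hcpt => ⟨IsSeqCompactHB.exists_HBnorm_le (fun f hf => (hK f hf).1) hcpt,
    IsSeqCompactHB.uniformLittleOh hK hcpt⟩, fun ⟨⟨M, hM⟩, hvan⟩ f hfK => ?_⟩
  obtain ⟨σ, hσ, g, hg, hlim⟩ := UniformLittleOh.exists_subseq_tendsto_HBnorm hα.le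
    (fun n => (hK _ (hfK n)).1) (fun n => hM _ (hfK n))
    (UniformLittleOh.mono hvan (range_subset_iff.mpr hfK))
  exact ⟨σ, hσ, g, hclosed _ (fun k => hfK (σ k)) g hg hlim, hlim⟩
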